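/- Let κ be an infinite well-ordered cardinal and Z the ideal of all subsets of κ that are not cofinal in κ. Then the space S(κ, Z) = ([κ]^{<ω}, τ[Z]) is a P-space if and only if cf(κ) > ℵ₀. -/

import Mathlib

/-!
A set is open in `τ_A[Z]` iff each of its points `y` has some `B_{y,z}`, `z ∈ Z`, inside it.
So countable intersections of open sets are open once `Z` is closed under countable unions.
Conversely, if `⋂ₙ B_{∅,zₙ}` is open it contains some `B_{∅,z}` around the point `∅`, and testing
with singletons gives `⋃ₙ zₙ ⊆ z`. For the non-cofinal sets of a linear order without maximum,
closure under countable unions means exactly `cf > ℵ₀`: a countable cofinal set is a countable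
union of singletons, none of which is cofinal.
-/

open Set

/-- The basic set `B_{x,z} = {y ∈ A : x ⊆ y ⊆ X \\ z}`. -/
def BSet {X : Type*} (A : Set (Set X)) (x z : Set X) : Set ↥A :=
  {y : ↥A | x ⊆ (y : Set X) ∧ (y : Set X) ∩ z = ∅}

/-- The topology `τ_A[Z]` on `A`, generated by the sets `B_{x,z}` for `x ∈ A`,
`z ∈ Z` with `x ∩ z = ∅`. -/
def tau {X : Type*} (A Z : Set (Set X)) : TopologicalSpace ↥A :=
  TopologicalSpace.generateFrom
    {S | ∃ x ∈ A, ∃ z ∈ Z, x ∩ z = ∅ ∧ S = BSet A x z}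

/-- A topology `t` is a P-space topology if every countable intersection of open
sets is open. -/
def IsPSpace {α : Type*} (t : TopologicalSpace α) : Prop :=
  ∀ U : ℕ → Set α, (∀ n, t.IsOpen (U n)) → t.IsOpen (⋂ n, U n)

section Cofinal

variable {α : Type*} [LinearOrder α]

theorem IsCofinal.or_of_union {s t : Set α} (h : IsCofinal (s ∪ t)) :
    IsCofinal s ∨ IsCofinal t := by
  by_contra! hst
  obtain ⟨a, ha⟩ := not_isCofinal_iff.1 hst.1
  obtain ⟨b, hb⟩ := not_isCofinal_iff.1 hst.2
  obtain ⟨y, hy | hy, hle⟩ := h (max a b)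
  · exact (ha y hy).not_ge ((le_max_left a b).trans hle)
  · exact (hb y hy).not_ge ((le_max_right a b).trans hle)

theorem Order.aleph0_lt_cof_iff_forall_not_isCofinal_iUnion [Nonempty α] [NoMaxOrder α] :
    Cardinal.aleph0 < Order.cof α ↔
      ∀ s : ℕ → Set α, (∀ n, ¬ IsCofinal (s n)) → ¬ IsCofinal (⋃ n, s n) := by
  refine ⟨fun h s hs hU => ?_, fun h => ?_⟩
  · rw [← sUnion_range] at hU
    obtain ⟨_, ⟨n, rfl⟩, hn⟩ := isCofinal_of_isCofinal_sUnion hU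
      ((Cardinal.le_aleph0_iff_set_countable.2 (countable_range s)).trans_lt h)
    exact hs n hn
  · by_contra! hcof
    obtain ⟨S, hS, hcard⟩ := Order.exists_cof_eq α
    have hSc : S.Countable := Cardinal.le_aleph0_iff_set_countable.1 (hcard ▸ hcof)
    obtain ⟨f, rfl⟩ := hSc.exists_eq_range hS.nonempty
    refine h (fun n => {f n}) (fun n => ?_) (by simpa using hS)
    rw [isCofinal_singleton_iff]
    exact not_isTop (f n)

end Cofinal

theorem aleph0_lt_cof_Iio_iff (o : Ordinal) :
    Cardinal.aleph0 < Order.cof (Iio o) ↔ Cardinal.aleph0 < o.cof := by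
  rw [Ordinal.cof_Iio, ← Ordinal.lift_cof, Cardinal.aleph0_lt_lift]

section Tau

variable {X : Type*} {A Z : Set (Set X)}

theorem BSet_anti {x z z' : Set X} (h : z ⊆ z') : BSet A x z' ⊆ BSet A x z :=
  fun _ hy => ⟨hy.1, subset_empty_iff.1 (hy.2 ▸ inter_subset_inter_right _ h)⟩

theorem isOpen_tau_iff (hZ₀ : ∅ ∈ Z) (hZu : ∀ z₁ ∈ Z, ∀ z₂ ∈ Z, z₁ ∪ z₂ ∈ Z) {U : Set ↥A} :
    (tau A Z).IsOpen U ↔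
      ∀ y ∈ U, ∃ z ∈ Z, (y : Set X) ∩ z = ∅ ∧ BSet A (y : Set X) z ⊆ U := by
  let := tau A Z
  refine ⟨fun hU => ?_, fun h => isOpen_iff_forall_mem_open.2 fun y hy => ?_⟩
  · induction hU with
    | basic S hS =>
      obtain ⟨x, -, z, hz, -, rfl⟩ := hS
      exact fun y hy => ⟨z, hz, hy.2, fun w hw => ⟨hy.1.trans hw.1, hw.2⟩⟩
    | univ => exact fun _ _ => ⟨∅, hZ₀, inter_empty _, subset_univ _⟩
    | inter s t _ _ ihs iht =>
      intro y hy
      obtain ⟨z₁, hz₁, hd₁, hs⟩ := ihs y hy.1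
      obtain ⟨z₂, hz₂, hd₂, ht⟩ := iht y hy.2
      refine ⟨z₁ ∪ z₂, hZu _ hz₁ _ hz₂, by rw [inter_union_distrib_left, hd₁, hd₂, union_empty],
        subset_inter ((BSet_anti subset_union_left).trans hs)
          ((BSet_anti subset_union_right).trans ht)⟩
    | sUnion S _ ih =>
      rintro y ⟨s, hs, hys⟩
      obtain ⟨z, hz, hd, hsub⟩ := ih s hs y hys
      exact ⟨z, hz, hd, hsub.trans (subset_sUnion_of_mem hs)⟩
  · obtain ⟨z, hz, hd, hsub⟩ := h y hy
    exact ⟨_, hsub, .basic _ ⟨_, y.2, z, hz, hd, rfl⟩, subset_rfl, hd⟩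

theorem iUnion_mem_of_isPSpace_tau (hA₀ : ∅ ∈ A) (hA₁ : ∀ x, {x} ∈ A) (hZ₀ : ∅ ∈ Z)
    (hZu : ∀ z₁ ∈ Z, ∀ z₂ ∈ Z, z₁ ∪ z₂ ∈ Z) (hZl : IsLowerSet Z) (hP : IsPSpace (tau A Z))
    (z : ℕ → Set X) (hz : ∀ n, z n ∈ Z) : ⋃ n, z n ∈ Z := by
  have hopen : (tau A Z).IsOpen (⋂ n, BSet A ∅ (z n)) :=
    hP _ fun n => .basic _ ⟨∅, hA₀, z n, hz n, empty_inter _, rfl⟩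
  obtain ⟨z', hz', -, hsub⟩ := (isOpen_tau_iff hZ₀ hZu).1 hopen ⟨∅, hA₀⟩
    (mem_iInter.2 fun n => ⟨subset_rfl, empty_inter _⟩)
  refine hZl (iUnion_subset fun n x hx => by_contra fun hxz' => ?_) hz'
  have hx' := (mem_iInter.1 (hsub (a := ⟨{x}, hA₁ x⟩)
    ⟨empty_subset _, singleton_inter_eq_empty.2 hxz'⟩) n).2
  exact singleton_inter_eq_empty.1 hx' hx

theorem isPSpace_tau_of_iUnion_mem (hZ₀ : ∅ ∈ Z) (hZu : ∀ z₁ ∈ Z, ∀ z₂ ∈ Z, z₁ ∪ z₂ ∈ Z)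
    (hσ : ∀ z : ℕ → Set X, (∀ n, z n ∈ Z) → ⋃ n, z n ∈ Z) : IsPSpace (tau A Z) := by
  intro U hU
  refine (isOpen_tau_iff hZ₀ hZu).2 fun y hy => ?_
  choose z hz hd hsub using fun n => (isOpen_tau_iff hZ₀ hZu).1 (hU n) y (mem_iInter.1 hy n)
  refine ⟨⋃ n, z n, hσ z hz, by simp [inter_iUnion, hd], ?_⟩
  exact subset_iInter fun n => (BSet_anti (subset_iUnion z n)).trans (hsub n)

theorem isPSpace_tau_iff (hA₀ : ∅ ∈ A) (hA₁ : ∀ x, {x} ∈ A) (hZ₀ : ∅ ∈ Z)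
    (hZu : ∀ z₁ ∈ Z, ∀ z₂ ∈ Z, z₁ ∪ z₂ ∈ Z) (hZl : IsLowerSet Z) :
    IsPSpace (tau A Z) ↔ ∀ z : ℕ → Set X, (∀ n, z n ∈ Z) → ⋃ n, z n ∈ Z :=
  ⟨iUnion_mem_of_isPSpace_tau hA₀ hA₁ hZ₀ hZu hZl, isPSpace_tau_of_iUnion_mem hZ₀ hZu⟩

end Tau

theorem isPSpace_tau_finite_notCofinal_iff {α : Type*} [LinearOrder α] [Nonempty α]
    [NoMaxOrder α] :
    IsPSpace (tau {s : Set α | s.Finite} {s | ¬ IsCofinal s}) ↔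
      Cardinal.aleph0 < Order.cof α := by
  rw [Order.aleph0_lt_cof_iff_forall_not_isCofinal_iUnion]
  exact isPSpace_tau_iff finite_empty finite_singleton
    (fun h => not_isEmpty_of_nonempty _ (isCofinal_empty_iff.1 h))
    (fun _ h₁ _ h₂ h => h.or_of_union.elim h₁ h₂) (fun _ _ hst h ht => h (ht.mono hst))

/-- Theorem 5.1: for an infinite well-ordered cardinal `κ` and `Z` the ideal of
subsets of `κ` that are not cofinal in `κ`, the space `S(κ, Z)` (finite subsets
of `κ` with the topology `τ[Z]`) is a P-space iff `cf(κ) > ℵ₀`. -/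
theorem pspace_iff_uncountable_cofinality (c : Cardinal) (hc : Cardinal.aleph0 ≤ c) :
    IsPSpace (tau {s : Set {o : Ordinal // o < c.ord} | s.Finite}
        {s : Set {o : Ordinal // o < c.ord} | ¬ ∀ x, ∃ y ∈ s, x ≤ y}) ↔
      Cardinal.aleph0 < (c.ord).cof := by
  have hlim := Cardinal.isSuccLimit_ord hc
  have : Nonempty (Iio c.ord) := ⟨⟨0, hlim.pos⟩⟩
  have : NoMaxOrder (Iio c.ord) :=
    ⟨fun x => ⟨⟨Order.succ x, hlim.succ_lt x.2⟩, Order.lt_succ x.1⟩⟩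
  exact (isPSpace_tau_finite_notCofinal_iff (α := Iio c.ord)).trans (aleph0_lt_cof_Iio_iff _)
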